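/- Let R ≥ 1 and I ⊂ ℝ an interval of length one. Let ρ : I → (0,∞) be integrable with ρ(λx+(1-λ)y) ≤ R[λρ(x)+(1-λ)ρ(y)] for all x,y ∈ I, 0 < λ < 1. Then for any absolutely continuous g : closure(I) → [0,∞) vanishing at both endpoints of I, ∫_I g ρ ≤ (R/2) ∫_I |g'| ρ. -/

import Mathlib

/-!
Put `F t = ∫ x in t..b, ρ x`. By Fubini `∫ g ρ = ∫ g' F`, and since `∫ g' = g b = 0` the function
`2 F` may be shifted by any constant `c`: `2 ∫ g ρ = ∫ g' (2 F - c)`. Integrating the secant bound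
given by relaxed convexity yields `2 (F s - F t) ≤ R (b - a) (ρ s + ρ t)` for all `s, t`, which is
exactly what is needed for some `c` to satisfy `|2 F - c| ≤ R (b - a) ρ` pointwise. Hence
`2 ∫ g ρ ≤ R (b - a) ∫ |g'| ρ`.
-/

open Set MeasureTheory

def RelaxedConvexOn (R : ℝ) (S : Set ℝ) (ρ : ℝ → ℝ) : Prop :=
  ∀ x ∈ S, ∀ y ∈ S, ∀ l : ℝ, 0 < l → l < 1 →
    ρ (l * x + (1 - l) * y) ≤ R * (l * ρ x + (1 - l) * ρ y)

theorem exists_forall_abs_sub_le {α : Type*} {S : Set α} {ψ w : α → ℝ}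
    (h : ∀ s ∈ S, ∀ t ∈ S, ψ s - ψ t ≤ w s + w t) : ∃ c, ∀ t ∈ S, |ψ t - c| ≤ w t := by
  refine ⟨sInf ((fun s => ψ s + w s) '' S), fun t ht => abs_le.2 ⟨?_, ?_⟩⟩
  · have hbdd : BddBelow ((fun s => ψ s + w s) '' S) := by
      refine ⟨ψ t - w t, ?_⟩
      rintro _ ⟨s, hs, rfl⟩
      linarith [h t ht s hs]
    linarith [csInf_le hbdd (mem_image_of_mem _ ht)]
  · have : ψ t - w t ≤ sInf ((fun s => ψ s + w s) '' S) := by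
      refine le_csInf (Nonempty.image _ ⟨t, ht⟩) ?_
      rintro _ ⟨s, hs, rfl⟩
      linarith [h t ht s hs]
    linarith

theorem integral_primitive_mul_eq_integral_mul_tail {a b : ℝ} (hab : a ≤ b) {f g : ℝ → ℝ}
    (hf : IntegrableOn f (Icc a b)) (hg : IntegrableOn g (Icc a b)) :
    ∫ x in a..b, (∫ t in a..x, f t) * g x = ∫ t in a..b, f t * ∫ x in t..b, g x := by
  set σ := volume.restrict (Ioc a b)
  have hf' : Integrable f σ := hf.mono_set Ioc_subset_Icc_self
  have hg' : Integrable g σ := hg.mono_set Ioc_subset_Icc_self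
  let k : ℝ → ℝ → ℝ := fun x t => {p : ℝ × ℝ | p.2 ≤ p.1}.indicator (fun p => g p.1 * f p.2) (x, t)
  have hk : Integrable (Function.uncurry k) (σ.prod σ) :=
    (hg'.mul_prod hf').indicator (measurableSet_le measurable_snd measurable_fst)
  have inner_t : ∀ x ∈ Ioc a b, ∫ t, k x t ∂σ = (∫ t in a..x, f t) * g x := by
    intro x hx
    have : (k x) = (Iic x).indicator (fun t => g x * f t) := by
      ext t; simp [k, Set.indicator_apply]
    rw [this, integral_indicator measurableSet_Iic, Measure.restrict_restrict measurableSet_Iic,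
      Iic_inter_Ioc_of_le hx.2, integral_const_mul, intervalIntegral.integral_of_le hx.1.le, mul_comm]
  have inner_x : ∀ t ∈ Ioc a b, ∫ x, k x t ∂σ = f t * ∫ x in t..b, g x := by
    intro t ht
    have : (fun x => k x t) = (Ici t).indicator (fun x => g x * f t) := by
      ext x; simp [k, Set.indicator_apply]
    rw [this, integral_indicator measurableSet_Ici, Measure.restrict_restrict measurableSet_Ici,
      integral_mul_const, intervalIntegral.integral_of_le ht.2, mul_comm]
    have hset : Ici t ∩ Ioc a b = Icc t b := by
      ext x
      simp only [mem_inter_iff, mem_Ici, mem_Ioc, mem_Icc]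
      exact ⟨fun h => ⟨h.1, h.2.2⟩, fun h => ⟨h.1, ht.1.trans_le h.1, h.2⟩⟩
    rw [hset, integral_Icc_eq_integral_Ioc]
  rw [intervalIntegral.integral_of_le hab, intervalIntegral.integral_of_le hab,
    ← setIntegral_congr_fun measurableSet_Ioc inner_t, ← setIntegral_congr_fun measurableSet_Ioc inner_x]
  exact integral_integral_swap hk

namespace RelaxedConvexOn

variable {R : ℝ} {S : Set ℝ} {ρ : ℝ → ℝ}

theorem le_mul_self (h : RelaxedConvexOn R S ρ) {x : ℝ} (hx : x ∈ S) : ρ x ≤ R * ρ x := by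
  have := h x hx x hx (1 / 2) (by norm_num) (by norm_num)
  ring_nf at this ⊢
  exact this

theorem le_secant (h : RelaxedConvexOn R S ρ) {s t x : ℝ} (hs : s ∈ S) (ht : t ∈ S)
    (hx : x ∈ Icc s t) (hst : s < t) :
    ρ x ≤ R * ((t - x) * ρ s + (x - s) * ρ t) / (t - s) := by
  have hts : 0 < t - s := sub_pos.2 hst
  rcases hx.1.eq_or_lt with rfl | hsx
  · rw [le_div_iff₀ hts]
    nlinarith [h.le_mul_self hs]
  rcases hx.2.eq_or_lt with rfl | hxt
  · rw [le_div_iff₀ hts]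
    nlinarith [h.le_mul_self ht]
  have hl : 0 < (x - s) / (t - s) := div_pos (by linarith) hts
  have hl1 : (x - s) / (t - s) < 1 := (div_lt_one hts).2 (by linarith)
  convert h t ht s hs _ hl hl1 using 1
  · congr 1; field_simp; ring
  · field_simp; ring

theorem le_mul_max (h : RelaxedConvexOn R S ρ) (hR : 0 ≤ R) {s t x : ℝ} (hs : s ∈ S)
    (ht : t ∈ S) (hx : x ∈ Icc s t) : ρ x ≤ R * max (ρ s) (ρ t) := by
  rcases hx.1.eq_or_lt with rfl | hsx
  · exact (h.le_mul_self hs).trans (mul_le_mul_of_nonneg_left (le_max_left _ _) hR)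
  have hts : 0 < t - s := by linarith [hx.2]
  refine (h.le_secant hs ht hx (by linarith [hx.2])).trans ?_
  rw [div_le_iff₀ hts, mul_assoc]
  refine mul_le_mul_of_nonneg_left ?_ hR
  nlinarith [le_max_left (ρ s) (ρ t), le_max_right (ρ s) (ρ t), hx.2]

theorem integral_le (h : RelaxedConvexOn R S ρ) {s t : ℝ} (hs : s ∈ S) (ht : t ∈ S)
    (hst : s ≤ t) (hρ : IntervalIntegrable ρ volume s t) :
    ∫ x in s..t, ρ x ≤ R * (t - s) * (ρ s + ρ t) / 2 := by
  rcases hst.eq_or_lt with rfl | hst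
  · simp
  calc ∫ x in s..t, ρ x
      ≤ ∫ x in s..t, R * ((t - x) * ρ s + (x - s) * ρ t) / (t - s) :=
        intervalIntegral.integral_mono_on hst.le hρ (Continuous.intervalIntegrable (by fun_prop) _ _)
          fun x hx => h.le_secant hs ht hx hst
    _ = R * (t - s) * (ρ s + ρ t) / 2 := by
        have : t - s ≠ 0 := (sub_pos.2 hst).ne'
        rw [intervalIntegral.integral_div, intervalIntegral.integral_const_mul,
          intervalIntegral.integral_add (Continuous.intervalIntegrable (by fun_prop) _ _)
            (Continuous.intervalIntegrable (by fun_prop) _ _),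
          intervalIntegral.integral_mul_const, intervalIntegral.integral_mul_const]
        simp only [intervalIntegral.integral_comp_sub_left fun x => x, sub_self, integral_id,
          ne_eq, OfNat.ofNat_ne_zero, not_false_eq_true, zero_pow, sub_zero,
          intervalIntegral.intervalIntegrable_id, intervalIntegrable_const,
          intervalIntegral.integral_sub, intervalIntegral.integral_const, smul_eq_mul]
        field_simp
        ring

theorem two_mul_integral_le {a b : ℝ} (h : RelaxedConvexOn R (Icc a b) ρ) (hR : 0 ≤ R)
    (hρ0 : ∀ x ∈ Icc a b, 0 ≤ ρ x) (hρ : IntegrableOn ρ (Icc a b)) {s t : ℝ}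
    (hs : s ∈ Icc a b) (ht : t ∈ Icc a b) :
    2 * ∫ x in s..t, ρ x ≤ R * (b - a) * (ρ s + ρ t) := by
  have hsum : 0 ≤ R * (ρ s + ρ t) := mul_nonneg hR (add_nonneg (hρ0 s hs) (hρ0 t ht))
  rcases le_total s t with hst | hts
  · have hint := h.integral_le hs ht hst ((hρ.mono_set (uIcc_subset_Icc hs ht)).intervalIntegrable)
    nlinarith [hs.1, ht.2]
  · have : 0 ≤ ∫ x in t..s, ρ x :=
      intervalIntegral.integral_nonneg hts fun x hx => hρ0 x ⟨ht.1.trans hx.1, hx.2.trans hs.2⟩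
    rw [intervalIntegral.integral_symm]
    nlinarith [hs.1, hs.2, ht.1, ht.2]

theorem integrableOn_mul {a b : ℝ} (h : RelaxedConvexOn R (Icc a b) ρ) (hR : 0 ≤ R)
    (hρ0 : ∀ x ∈ Icc a b, 0 ≤ ρ x) (hρ : IntegrableOn ρ (Icc a b)) {f : ℝ → ℝ}
    (hf : IntegrableOn f (Icc a b)) : IntegrableOn (fun t => f t * ρ t) (Icc a b) := by
  have hρ_bdd : ∀ x ∈ Icc a b, ‖ρ x‖ ≤ R * max (ρ a) (ρ b) := fun x hx => by
    rw [Real.norm_of_nonneg (hρ0 x hx)]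
    exact h.le_mul_max hR (left_mem_Icc.2 (hx.1.trans hx.2)) (right_mem_Icc.2 (hx.1.trans hx.2)) hx
  exact hf.mul_bdd hρ.aestronglyMeasurable (ae_restrict_of_forall_mem measurableSet_Icc hρ_bdd)

theorem exists_abs_two_mul_integral_sub_le {a b : ℝ} (h : RelaxedConvexOn R (Icc a b) ρ)
    (hR : 0 ≤ R) (hρ0 : ∀ x ∈ Icc a b, 0 ≤ ρ x) (hρ : IntegrableOn ρ (Icc a b)) :
    ∃ c, ∀ t ∈ Icc a b, |2 * (∫ x in t..b, ρ x) - c| ≤ R * (b - a) * ρ t := by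
  refine exists_forall_abs_sub_le fun s hs t ht => ?_
  have hsplit : (∫ x in s..b, ρ x) - ∫ x in t..b, ρ x = ∫ x in s..t, ρ x :=
    sub_eq_of_eq_add (intervalIntegral.integral_add_adjacent_intervals
      ((hρ.mono_set (uIcc_subset_Icc hs ht)).intervalIntegrable)
      ((hρ.mono_set (uIcc_subset_Icc ht (right_mem_Icc.2 (ht.1.trans ht.2)))).intervalIntegrable)).symm
  linarith [h.two_mul_integral_le hR hρ0 hρ hs ht]

theorem integral_mul_le {a b : ℝ} (h : RelaxedConvexOn R (Icc a b) ρ) (hR : 0 ≤ R)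
    (hρ0 : ∀ x ∈ Icc a b, 0 ≤ ρ x) (hρ : IntegrableOn ρ (Icc a b)) (hab : a ≤ b)
    {g g' : ℝ → ℝ} (hg' : IntegrableOn g' (Icc a b))
    (hg : ∀ x ∈ Icc a b, g x = ∫ t in a..x, g' t) (hgb : g b = 0) :
    ∫ x in a..b, g x * ρ x ≤ R * (b - a) / 2 * ∫ x in a..b, |g' x| * ρ x := by
  set F : ℝ → ℝ := fun t => ∫ x in t..b, ρ x
  obtain ⟨c, hc⟩ := h.exists_abs_two_mul_integral_sub_le hR hρ0 hρ
  have hII : ∀ {f : ℝ → ℝ}, IntegrableOn f (Icc a b) → IntervalIntegrable f volume a b :=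
    (intervalIntegrable_iff_integrableOn_Icc_of_le hab).2
  have hF : ContinuousOn F (Icc a b) := by
    rw [← uIcc_of_le hab] at hρ ⊢
    exact intervalIntegral.continuousOn_primitive_interval_left hρ
  have hg'F := hII (hg'.mul_continuousOn hF isCompact_Icc)
  have hgF : ∫ x in a..b, g x * ρ x = ∫ t in a..b, g' t * F t := by
    rw [← integral_primitive_mul_eq_integral_mul_tail hab hg' hρ]
    refine intervalIntegral.integral_congr fun x hx => ?_
    rw [uIcc_of_le hab] at hx
    simp only [hg x hx]
  have hg'_zero : ∫ t in a..b, g' t = 0 := (hg b (right_mem_Icc.2 hab)).symm.trans hgb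
  calc ∫ x in a..b, g x * ρ x
      = (∫ t in a..b, (2 * (g' t * F t) - c * g' t)) / 2 := by
        rw [intervalIntegral.integral_sub (hg'F.const_mul 2) ((hII hg').const_mul c),
          intervalIntegral.integral_const_mul, intervalIntegral.integral_const_mul, hg'_zero, hgF]
        ring
    _ ≤ (∫ t in a..b, R * (b - a) * (|g' t| * ρ t)) / 2 := by
        gcongr
        refine intervalIntegral.integral_mono_on hab ((hg'F.const_mul 2).sub ((hII hg').const_mul c))
          ((hII (h.integrableOn_mul hR hρ0 hρ hg'.abs)).const_mul _) fun t ht => ?_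
        calc 2 * (g' t * F t) - c * g' t = g' t * (2 * F t - c) := by ring
          _ ≤ |g' t| * |2 * F t - c| := by rw [← abs_mul]; exact le_abs_self _
          _ ≤ |g' t| * (R * (b - a) * ρ t) := by gcongr; exact hc t ht
          _ = R * (b - a) * (|g' t| * ρ t) := by ring
    _ = R * (b - a) / 2 * ∫ x in a..b, |g' x| * ρ x := by
        rw [intervalIntegral.integral_const_mul]
        ring

end RelaxedConvexOn

theorem cheeger_type_inequality_general (R a : ℝ) (hR : 1 ≤ R) (ρ : ℝ → ℝ)
    (hpos : ∀ x ∈ Icc a (a + 1), 0 < ρ x)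
    (hint : IntegrableOn ρ (Icc a (a + 1)))
    (hconv : ∀ x ∈ Icc a (a + 1), ∀ y ∈ Icc a (a + 1), ∀ l : ℝ, 0 < l → l < 1 →
      ρ (l * x + (1 - l) * y) ≤ R * (l * ρ x + (1 - l) * ρ y))
    (g g' : ℝ → ℝ)
    (hg'int : IntegrableOn g' (Icc a (a + 1)))
    (hgrep : ∀ x ∈ Icc a (a + 1), g x = ∫ t in a..x, g' t)
    (hgb : g (a + 1) = 0) :
    ∫ x in a..(a + 1), g x * ρ x ≤ R / 2 * ∫ x in a..(a + 1), |g' x| * ρ x := by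
  have hconv' : RelaxedConvexOn R (Icc a (a + 1)) ρ := hconv
  simpa using hconv'.integral_mul_le (by linarith) (fun x hx => (hpos x hx).le) hint (by linarith)
    hg'int hgrep hgb

theorem cheeger_type_inequality (R a : ℝ) (hR : 1 ≤ R) (ρ : ℝ → ℝ)
    (hpos : ∀ x ∈ Icc a (a + 1), 0 < ρ x)
    (hint : IntegrableOn ρ (Icc a (a + 1)))
    (hconv : ∀ x ∈ Icc a (a + 1), ∀ y ∈ Icc a (a + 1), ∀ l : ℝ, 0 < l → l < 1 →
      ρ (l * x + (1 - l) * y) ≤ R * (l * ρ x + (1 - l) * ρ y))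
    (g g' : ℝ → ℝ)
    (hg0 : ∀ x ∈ Icc a (a + 1), 0 ≤ g x)
    (hg'int : IntegrableOn g' (Icc a (a + 1)))
    (hgrep : ∀ x ∈ Icc a (a + 1), g x = ∫ t in a..x, g' t)
    (hga : g a = 0) (hgb : g (a + 1) = 0) :
    ∫ x in a..(a + 1), g x * ρ x ≤ R / 2 * ∫ x in a..(a + 1), |g' x| * ρ x :=
  cheeger_type_inequality_general R a hR ρ hpos hint hconv g g' hg'int hgrep hgb
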